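/- A single local T gate completely erases the magic of the local-magic state: applying T to the first qubit of v = (1/√2)(|00⟩ + e^{iπ/4}|11⟩) yields w = (T ⊗ I) v = (1/√2)(|00⟩ + i|11⟩), and M₂(w wᴴ) = 0. -/

import Mathlib

noncomputable section
open Matrix Kronecker

/-- The four single-qubit Pauli matrices I, X, Y, Z. -/
def pauli : Fin 4 → Matrix (Fin 2) (Fin 2) ℂ :=
  ![1, !![0, 1; 1, 0], !![0, -Complex.I; Complex.I, 0], !![1, 0; 0, -1]]

/-- Two-qubit Pauli strings σ₁ ⊗ σ₂. -/
def pauli2 (a : Fin 4 × Fin 4) : Matrix (Fin 2 × Fin 2) (Fin 2 × Fin 2) ℂ :=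
  pauli a.1 ⊗ₖ pauli a.2

/-- Rank-one density matrix v vᴴ. -/
def dm {ι : Type*} (v : ι → ℂ) : Matrix ι ι ℂ := Matrix.vecMulVec v (star v)

/-- Stabilizer 2-Rényi entropy of a two-qubit state. -/
def M2two (ψ : Matrix (Fin 2 × Fin 2) (Fin 2 × Fin 2) ℂ) : ℝ :=
  - Real.logb 2 ((1 / 4) * ∑ a : Fin 4 × Fin 4, ‖(pauli2 a * ψ).trace‖ ^ 4)

/-- The T gate diag(1, e^{iπ/4}). -/
def Tgate : Matrix (Fin 2) (Fin 2) ℂ :=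
  !![1, 0; 0, Complex.exp (Complex.I * (Real.pi / 4 : ℝ))]

/-- The local-magic state (1/√2)(|00⟩ + e^{iπ/4}|11⟩). -/
def lmState : Fin 2 × Fin 2 → ℂ := fun p =>
  if p = ((0 : Fin 2), (0 : Fin 2)) then (1 / Real.sqrt 2 : ℝ)
  else if p = ((1 : Fin 2), (1 : Fin 2)) then
    (1 / Real.sqrt 2 : ℝ) * Complex.exp (Complex.I * (Real.pi / 4 : ℝ))
  else 0

/-- The state (1/√2)(|00⟩ + i|11⟩). -/
def iBell : Fin 2 × Fin 2 → ℂ := fun p =>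
  if p = ((0 : Fin 2), (0 : Fin 2)) then (1 / Real.sqrt 2 : ℝ)
  else if p = ((1 : Fin 2), (1 : Fin 2)) then Complex.I * (1 / Real.sqrt 2 : ℝ)
  else 0

/-! Since (e^{iπ/4})² = i, the T gate on the first qubit turns the phase e^{iπ/4} on |11⟩ into i. The
resulting state (|00⟩ + i|11⟩)/√2 is a stabilizer state: its Pauli expectation values are 1 on its
stabilizer group {I⊗I, X⊗Y, Y⊗X, Z⊗Z} and 0 elsewhere, so the sum of their fourth powers is 4 and
M₂ = -log₂ 1 = 0. -/

theorem exp_I_mul_pi_div_four_sq : Complex.exp (Complex.I * (Real.pi / 4)) ^ 2 = Complex.I := by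
  rw [← Complex.exp_nat_mul]
  convert Complex.exp_pi_div_two_mul_I using 2
  push_cast
  ring

theorem Tgate_kron_one_mulVec_lmState :
    (Tgate ⊗ₖ (1 : Matrix (Fin 2) (Fin 2) ℂ)) *ᵥ lmState = iBell := by
  funext ⟨i, j⟩
  fin_cases i <;> fin_cases j <;>
    simp [mulVec, dotProduct, Fintype.sum_prod_type, Tgate, lmState, iBell, one_apply]
  linear_combination (Real.sqrt 2 : ℂ)⁻¹ * exp_I_mul_pi_div_four_sq

theorem trace_mul_dm {ι : Type*} [Fintype ι] (P : Matrix ι ι ℂ) (v : ι → ℂ) :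
    (P * dm v).trace = P *ᵥ v ⬝ᵥ star v := by
  rw [dm, mul_vecMulVec, trace_vecMulVec]

/-- Indices into `pauli` of the strings I⊗I, X⊗Y, Y⊗X, Z⊗Z. -/
def iBellStabilizers : Finset (Fin 4 × Fin 4) := {(0, 0), (1, 2), (2, 1), (3, 3)}

theorem trace_pauli2_mul_dm_iBell (a : Fin 4 × Fin 4) :
    (pauli2 a * dm iBell).trace = if a ∈ iBellStabilizers then 1 else 0 := by
  have hs : (Real.sqrt 2 : ℂ)⁻¹ ^ 2 = 1 / 2 := by
    rw [inv_pow, ← Complex.ofReal_pow, Real.sq_sqrt zero_le_two]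
    norm_num
  rw [trace_mul_dm]
  obtain ⟨i, j⟩ := a
  fin_cases i <;> fin_cases j <;>
    simp [iBellStabilizers, pauli2, pauli, iBell, mulVec, dotProduct, Fintype.sum_prod_type] <;>
    ring_nf <;> simp only [hs, Complex.I_sq] <;> ring

theorem sum_norm_trace_pauli2_mul_dm_iBell_pow_four :
    ∑ a : Fin 4 × Fin 4, ‖(pauli2 a * dm iBell).trace‖ ^ 4 = 4 := by
  simp_rw [trace_pauli2_mul_dm_iBell, apply_ite (‖·‖ ^ 4), norm_one, norm_zero, one_pow,
    zero_pow four_ne_zero, Finset.sum_boole, Finset.filter_mem_eq_inter, Finset.univ_inter]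
  rfl

theorem local_T_gate_erases_magic :
    (Tgate ⊗ₖ (1 : Matrix (Fin 2) (Fin 2) ℂ)).mulVec lmState = iBell ∧
      M2two (dm iBell) = 0 := by
  refine ⟨Tgate_kron_one_mulVec_lmState, ?_⟩
  rw [M2two, sum_norm_trace_pauli2_mul_dm_iBell_pow_four]
  norm_num
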